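/- Let T ∈ G_γ^d, where the sequence γ is strictly positive, non-increasing with limit zero, summable, and γ_1 = 1. Then sup_{m∈ℕ} ‖ [∇_γ]_m^{1/2} [T]_m^{−1} [∇_γ]_m^{1/2} ‖ ≤ 4d³, where [∇_γ]_m is the m×m diagonal matrix with diagonal entries γ_1,…,γ_m and ‖·‖ is the spectral norm. -/

import Mathlib

open scoped RealInnerProductSpace Classical ENNReal NNReal
open Matrix MeasureTheory

noncomputable section

variable {H : Type} [NormedAddCommGroup H] [InnerProductSpace ℝ H] [CompleteSpace H]

/-- Spectral norm of a real matrix (largest singular value). -/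
def specNorm {m : ℕ} (A : Matrix (Fin m) (Fin m) ℝ) : ℝ :=
  ‖Matrix.toEuclideanCLM (𝕜 := ℝ) A‖

/-- Galerkin matrix `[T]_m = (⟪ψ_j, T ψ_k⟫)_{1≤j,k≤m}` (0-indexed). -/
def opMat (ψ : HilbertBasis ℕ ℝ H) (T : H →L[ℝ] H) (m : ℕ) :
    Matrix (Fin m) (Fin m) ℝ :=
  Matrix.of fun j k => ⟪ψ (j : ℕ), T (ψ (k : ℕ))⟫

/-- The ellipsoid `F_β^r`. -/
def memF (ψ : HilbertBasis ℕ ℝ H) (β : ℕ → ℝ) (r : ℝ) (h : H) : Prop :=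
  Summable (fun j => β j * ⟪h, ψ j⟫ ^ 2) ∧ (∑' j, β j * ⟪h, ψ j⟫ ^ 2) ≤ r

/-- The class `G_γ^d` of strictly positive nuclear operators with sandwiched norm. -/
def memG (ψ : HilbertBasis ℕ ℝ H) (γ : ℕ → ℝ) (d : ℝ) (T : H →L[ℝ] H) : Prop :=
  (∀ x y : H, ⟪T x, y⟫ = ⟪x, T y⟫) ∧ (∀ h : H, h ≠ 0 → 0 < ⟪T h, h⟫) ∧
    Summable (fun j => ⟪T (ψ j), ψ j⟫) ∧
    ∀ h : H,
      (d ^ 2)⁻¹ * (∑' j, γ j ^ 2 * ⟪h, ψ j⟫ ^ 2) ≤ ‖T h‖ ^ 2 ∧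
      ‖T h‖ ^ 2 ≤ d ^ 2 * (∑' j, γ j ^ 2 * ⟪h, ψ j⟫ ^ 2)

/-- Coefficient vector `[g]_m` of `g = Γ φ`. -/
def gvec (ψ : HilbertBasis ℕ ℝ H) (Γ : H →L[ℝ] H) (φ : H) (m : ℕ) : Fin m → ℝ :=
  fun j => ⟪Γ φ, ψ (j : ℕ)⟫

/-- Coefficients `[Γ]_m⁻¹ [g]_m` of the Galerkin solution. -/
def galCoef (ψ : HilbertBasis ℕ ℝ H) (Γ : H →L[ℝ] H) (φ : H) (m : ℕ) : Fin m → ℝ :=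
  (opMat ψ Γ m)⁻¹ *ᵥ gvec ψ Γ φ m

/-- The Galerkin solution `φ_m`. -/
def galerkin (ψ : HilbertBasis ℕ ℝ H) (Γ : H →L[ℝ] H) (φ : H) (m : ℕ) : H :=
  ∑ j : Fin m, galCoef ψ Γ φ m j • (ψ (j : ℕ))

/-- The linear functional `ℓ(h) = Σ_j ℓ_j ⟨h, ψ_j⟩`. -/
def ellOf (ψ : HilbertBasis ℕ ℝ H) (lc : ℕ → ℝ) (h : H) : ℝ := ∑' j, lc j * ⟪h, ψ j⟫

/-- `[ℓ]_m`. -/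
def ellvec (lc : ℕ → ℝ) (m : ℕ) : Fin m → ℝ := fun j => lc (j : ℕ)

/-- Weighted (squared) norm `‖h‖_w²`. -/
def wnorm2 (ψ : HilbertBasis ℕ ℝ H) (w : ℕ → ℝ) (h : H) : ℝ := ∑' j, w j * ⟪h, ψ j⟫ ^ 2

/-- `V_m^γ = Σ_{j=1}^m ℓ_j²/γ_j`. -/
def Vgam (lc γ : ℕ → ℝ) (m : ℕ) : ℝ := ∑ j ∈ Finset.range m, lc j ^ 2 / γ j

/-- `V_m = max_{1≤k≤m} [ℓ]_k^t [Γ]_k⁻¹ [ℓ]_k`. -/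
def Vmax (ψ : HilbertBasis ℕ ℝ H) (lc : ℕ → ℝ) (Γ : H →L[ℝ] H) (m : ℕ) : ℝ :=
  ⨆ k : Fin m, ellvec lc (k + 1) ⬝ᵥ ((opMat ψ Γ (k + 1))⁻¹ *ᵥ ellvec lc (k + 1))

/-- `σ_m² = 2(σ_Y² + [g]_m^t [Γ]_m⁻¹ [g]_m)` with `σ_Y² = σ² + ⟨Γφ,φ⟩`. -/
def sigmaSqm (ψ : HilbertBasis ℕ ℝ H) (Γ : H →L[ℝ] H) (φ : H) (σ : ℝ) (m : ℕ) : ℝ :=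
  2 * ((σ ^ 2 + ⟪Γ φ, φ⟫) + gvec ψ Γ φ m ⬝ᵥ ((opMat ψ Γ m)⁻¹ *ᵥ gvec ψ Γ φ m))

/-- Theoretical penalty `p_m = 100 σ_m² V_m (1 + log n)/n`. -/
def penTheo (ψ : HilbertBasis ℕ ℝ H) (lc : ℕ → ℝ) (Γ : H →L[ℝ] H) (φ : H) (σ : ℝ)
    (n m : ℕ) : ℝ :=
  100 * sigmaSqm ψ Γ φ σ m * Vmax ψ lc Γ m * ((1 + Real.log n) / n)

/-- `R_m^ℓ[x]` (here `m ≥ 1`; 0-indexed sequences, so `γ_m` is `γ (m-1)`). -/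
def Rml (lc β γ : ℕ → ℝ) (x : ℝ) (m : ℕ) : ℝ :=
  max (∑' j, if m ≤ j then lc j ^ 2 / β j else 0)
    (max (γ (m - 1) / β (m - 1)) x * ∑ j ∈ Finset.range m, lc j ^ 2 / γ j)

/-- `R_*^ℓ[x] = min_{m ≥ 1} R_m^ℓ[x]`. -/
def Rstar (lc β γ : ℕ → ℝ) (x : ℝ) : ℝ := ⨅ m : ℕ, Rml lc β γ x (m + 1)

variable {Ω : Type}

/-- Empirical covariance matrix `[Γ̂]_m`. -/
def hatGam (ψ : HilbertBasis ℕ ℝ H) (n : ℕ) (X : Fin n → Ω → H) (m : ℕ) (ω : Ω) :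
    Matrix (Fin m) (Fin m) ℝ :=
  Matrix.of fun j k => (n : ℝ)⁻¹ * ∑ i, ⟪X i ω, ψ (j : ℕ)⟫ * ⟪X i ω, ψ (k : ℕ)⟫

/-- Empirical vector `[ĝ]_m`. -/
def hatgv (ψ : HilbertBasis ℕ ℝ H) (n : ℕ) (X : Fin n → Ω → H) (Y : Fin n → Ω → ℝ)
    (m : ℕ) (ω : Ω) : Fin m → ℝ :=
  fun j => (n : ℝ)⁻¹ * ∑ i, Y i ω * ⟪X i ω, ψ (j : ℕ)⟫

/-- The thresholded plug-in estimator `ℓ̂_m = ℓ(φ̂_m)`. -/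
def hatell (ψ : HilbertBasis ℕ ℝ H) (lc : ℕ → ℝ) (n : ℕ) (X : Fin n → Ω → H)
    (Y : Fin n → Ω → ℝ) (m : ℕ) (ω : Ω) : ℝ :=
  if IsUnit (hatGam ψ n X m ω).det ∧ specNorm (hatGam ψ n X m ω)⁻¹ ≤ (n : ℝ) then
    ellvec lc m ⬝ᵥ ((hatGam ψ n X m ω)⁻¹ *ᵥ hatgv ψ n X Y m ω)
  else 0

/-- `M_n^ℓ`. -/
def Mln (lc : ℕ → ℝ) (n : ℕ) : ℕ :=
  sSup {m | 1 ≤ m ∧ (m : ℝ) ≤ (n : ℝ) ^ ((1 : ℝ) / 4) ∧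
    (∑ j ∈ Finset.range m, lc j ^ 2) ≤ (n : ℝ)}

/-- Spectral norm of the inverse, `+∞` if singular. -/
def invNormE {m : ℕ} (A : Matrix (Fin m) (Fin m) ℝ) : ℝ≥0∞ :=
  if IsUnit A.det then ENNReal.ofReal (specNorm A⁻¹) else ⊤

/-- Random upper bound `M̂_n`. -/
def Mhat (ψ : HilbertBasis ℕ ℝ H) (lc : ℕ → ℝ) (n : ℕ) (X : Fin n → Ω → H) (ω : Ω) : ℕ :=
  let S := {m | 2 ≤ m ∧ m ≤ Mln lc n ∧
    ENNReal.ofReal ((n : ℝ) / (1 + Real.log n)) <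
      invNormE (hatGam ψ n X m ω) * ENNReal.ofReal (∑ j ∈ Finset.range m, lc j ^ 2)}
  if S.Nonempty then sInf S - 1 else Mln lc n

/-- Deterministic `M_n(a)` (with `a_m = a (m-1)` in 0-indexing). -/
def Mna (lc a : ℕ → ℝ) (n : ℕ) : ℕ :=
  let S := {m | 2 ≤ m ∧ m ≤ Mln lc n ∧
    (n : ℝ) / (1 + Real.log n) < a (m - 1) * ∑ j ∈ Finset.range m, lc j ^ 2}
  if S.Nonempty then sInf S - 1 else Mln lc n

/-- `V̂_m = max_{1≤k≤m} [ℓ]_k^t [Γ̂]_k⁻¹ [ℓ]_k`. -/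
def hatVmax (ψ : HilbertBasis ℕ ℝ H) (lc : ℕ → ℝ) (n : ℕ) (X : Fin n → Ω → H)
    (m : ℕ) (ω : Ω) : ℝ :=
  ⨆ k : Fin m, ellvec lc (k + 1) ⬝ᵥ ((hatGam ψ n X (k + 1) ω)⁻¹ *ᵥ ellvec lc (k + 1))

/-- Stochastic penalty `p̂_m`. -/
def hatpen (ψ : HilbertBasis ℕ ℝ H) (lc : ℕ → ℝ) (n : ℕ) (X : Fin n → Ω → H)
    (Y : Fin n → Ω → ℝ) (m : ℕ) (ω : Ω) : ℝ :=
  700 * (2 * (n : ℝ)⁻¹ * ∑ i, (Y i ω) ^ 2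
      + 2 * (hatgv ψ n X Y m ω ⬝ᵥ ((hatGam ψ n X m ω)⁻¹ *ᵥ hatgv ψ n X Y m ω)))
    * hatVmax ψ lc n X m ω * ((1 + Real.log n) / n)

/-- Contrast `κ_m`. -/
def contrast (ψ : HilbertBasis ℕ ℝ H) (lc : ℕ → ℝ) (n : ℕ) (X : Fin n → Ω → H)
    (Y : Fin n → Ω → ℝ) (m : ℕ) (ω : Ω) : ℝ :=
  sSup {x | ∃ k, m ≤ k ∧ k ≤ Mhat ψ lc n X ω ∧
    x = (hatell ψ lc n X Y k ω - hatell ψ lc n X Y m ω) ^ 2 - hatpen ψ lc n X Y k ω}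

/-- The fully data-driven dimension `m̂` (smallest minimizer of `κ + p̂`). -/
def mhat (ψ : HilbertBasis ℕ ℝ H) (lc : ℕ → ℝ) (n : ℕ) (X : Fin n → Ω → H)
    (Y : Fin n → Ω → ℝ) (ω : Ω) : ℕ :=
  sInf {m | 1 ≤ m ∧ m ≤ Mhat ψ lc n X ω ∧ ∀ k, 1 ≤ k → k ≤ Mhat ψ lc n X ω →
    contrast ψ lc n X Y m ω + hatpen ψ lc n X Y m ω ≤
      contrast ψ lc n X Y k ω + hatpen ψ lc n X Y k ω}

/-- The functional linear model with jointly Gaussian regressor and error,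
observed through an i.i.d. sample of size `n`. -/
structure FLModel [MeasurableSpace H] (ψ : HilbertBasis ℕ ℝ H)
    (σ : ℝ) (φ : H) (Γ : H →L[ℝ] H)
    [MeasurableSpace Ω] (P : Measure Ω) (n : ℕ)
    (X : Fin n → Ω → H) (Y : Fin n → Ω → ℝ) (ε : Fin n → Ω → ℝ) : Prop where
  measX : ∀ i, Measurable (X i)
  measEps : ∀ i, Measurable (ε i)
  modelEq : ∀ i ω, Y i ω = ⟪φ, X i ω⟫ + σ * ε i ω
  indep : ProbabilityTheory.iIndepFun (fun i ω => (X i ω, ε i ω)) P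
  identDistrib : ∀ i j, Measure.map (fun ω => (X i ω, ε i ω)) P
      = Measure.map (fun ω => (X j ω, ε j ω)) P
  centeredX : ∀ i (h : H), ∫ ω, ⟪X i ω, h⟫ ∂P = 0
  sqIntX : ∀ i, Integrable (fun ω => ‖X i ω‖ ^ 2) P
  epsMean : ∀ i, ∫ ω, ε i ω ∂P = 0
  epsVar : ∀ i, ∫ ω, (ε i ω) ^ 2 ∂P = 1
  uncorr : ∀ i (h : H), ∫ ω, ε i ω * ⟪X i ω, h⟫ ∂P = 0
  gaussian : ∀ i (k : ℕ) (hs : Fin k → H) (c : Fin k → ℝ) (c' : ℝ), ∃ v : NNReal,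
      Measure.map (fun ω => (∑ j, c j * ⟪X i ω, hs j⟫) + c' * ε i ω) P
        = ProbabilityTheory.gaussianReal 0 v
  covOp : ∀ i (h h' : H), ⟪Γ h, h'⟫ = ∫ ω, ⟪X i ω, h⟫ * ⟪X i ω, h'⟫ ∂P


/-! Membership `T ∈ G_γ^d` says `T² ≥ d⁻² ∇_γ²` as quadratic forms. The square root is operator
monotone, so `T ≥ d⁻¹ ∇_γ`. In finite dimensions this is applied to the Galerkin matrix `[T]_N`
shifted by `s_N = d (∑_{k ≥ N} γ_k²)^{1/2}`, which pays for the part of `‖T g‖²` that `[T]_N`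
does not see; letting `N → ∞` gives `[∇_γ]_m ≤ d [T]_m`. Inverting this Löwner inequality yields
`[∇_γ]_m^{1/2} [T]_m⁻¹ [∇_γ]_m^{1/2} ≤ d ≤ 4 d³`. -/

theorem Summable.sq {ι : Type*} {f : ι → ℝ} (hf : Summable f) : Summable fun i => f i ^ 2 := by
  have h1 : ∀ᶠ i in Filter.cofinite, |f i| ≤ 1 := by
    simpa using hf.tendsto_cofinite_zero.abs.eventually (ge_mem_nhds (by norm_num : |(0 : ℝ)| < 1))
  refine hf.abs.of_norm_bounded_eventually (h1.mono fun i hi => ?_)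
  rw [Real.norm_eq_abs, abs_pow]
  nlinarith [abs_nonneg (f i)]

namespace Matrix

variable {ι : Type*} [Fintype ι] [DecidableEq ι]

/- Test on an eigenvector `u` of `B - A` with eigenvalue `μ`: `‖B u‖² - ‖A u‖² = μ (2 uᵀA u + μ)`,
so `μ < 0` would force `uᵀB u = uᵀA u + μ < 0`. -/
theorem PosSemidef.sub_of_forall_mulVec_dotProduct_le {A B : Matrix ι ι ℝ}
    (hA : A.PosSemidef) (hB : B.PosSemidef)
    (h : ∀ x, A *ᵥ x ⬝ᵥ A *ᵥ x ≤ B *ᵥ x ⬝ᵥ B *ᵥ x) : (B - A).PosSemidef := by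
  have hC : (B - A).IsHermitian := hB.1.sub hA.1
  rw [hC.posSemidef_iff_eigenvalues_nonneg]
  intro i
  set u : ι → ℝ := ⇑(hC.eigenvectorBasis i)
  set μ := hC.eigenvalues i
  have hu : u ⬝ᵥ u = 1 := by
    have h1 : ⟪hC.eigenvectorBasis i, hC.eigenvectorBasis i⟫ = 1 := by
      rw [real_inner_self_eq_norm_sq, hC.eigenvectorBasis.orthonormal.1 i, one_pow]
    rwa [EuclideanSpace.inner_eq_star_dotProduct, star_trivial] at h1
  have hBu : B *ᵥ u = A *ᵥ u + μ • u := by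
    rw [← hC.mulVec_eigenvectorBasis i, sub_mulVec, add_sub_cancel]
  have hA0 : 0 ≤ u ⬝ᵥ A *ᵥ u := by simpa using hA.dotProduct_mulVec_nonneg u
  have hB0 : 0 ≤ u ⬝ᵥ B *ᵥ u := by simpa using hB.dotProduct_mulVec_nonneg u
  have hsq := h u
  rw [hBu] at hsq hB0
  simp only [dotProduct_add, add_dotProduct, dotProduct_smul, smul_dotProduct, smul_eq_mul,
    hu, dotProduct_comm (A *ᵥ u) u] at hsq hB0
  show 0 ≤ μ
  nlinarith

theorem PosSemidef.mulVec_dotProduct_add_sq_le {M : Matrix ι ι ℝ} (hM : M.PosSemidef) {s : ℝ}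
    (hs : 0 ≤ s) (x : ι → ℝ) :
    M *ᵥ x ⬝ᵥ M *ᵥ x + s ^ 2 * (x ⬝ᵥ x) ≤ (M + s • 1) *ᵥ x ⬝ᵥ (M + s • 1) *ᵥ x := by
  have hMx : 0 ≤ x ⬝ᵥ M *ᵥ x := by simpa using hM.dotProduct_mulVec_nonneg x
  simp only [add_mulVec, smul_mulVec, one_mulVec, dotProduct_add, add_dotProduct,
    dotProduct_smul, smul_dotProduct, smul_eq_mul, dotProduct_comm (M *ᵥ x) x]
  nlinarith

/- With `x = M⁻¹ Rᵀ w` the form is `w ⬝ R x = x ⬝ M x`; expand `‖c w - R x‖² ≥ 0`. -/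
theorem abs_dotProduct_mul_inv_mul_transpose_mulVec_le {M R : Matrix ι ι ℝ} {c : ℝ}
    (hM : IsUnit M) (hc : 0 < c) (hR : ∀ x, R *ᵥ x ⬝ᵥ R *ᵥ x ≤ c * (x ⬝ᵥ M *ᵥ x))
    (w : ι → ℝ) : |w ⬝ᵥ (R * M⁻¹ * Rᵀ) *ᵥ w| ≤ c * (w ⬝ᵥ w) := by
  set x := M⁻¹ *ᵥ Rᵀ *ᵥ w
  set y := R *ᵥ x
  have hMx : M *ᵥ x = Rᵀ *ᵥ w := by
    rw [mulVec_mulVec, mul_nonsing_inv _ ((isUnit_iff_isUnit_det M).mp hM), one_mulVec]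
  have hq : w ⬝ᵥ (R * M⁻¹ * Rᵀ) *ᵥ w = w ⬝ᵥ y := by
    simp only [y, x, mulVec_mulVec, Matrix.mul_assoc]
  have hy : w ⬝ᵥ y = x ⬝ᵥ M *ᵥ x := by
    rw [dotProduct_mulVec, ← mulVec_transpose, ← hMx, dotProduct_comm]
  have hsq : 0 ≤ (c • w - y) ⬝ᵥ (c • w - y) :=
    Finset.sum_nonneg fun i _ => mul_self_nonneg _
  simp only [sub_dotProduct, dotProduct_sub, smul_dotProduct, dotProduct_smul, smul_eq_mul,
    dotProduct_comm y w] at hsq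
  have hyy : 0 ≤ y ⬝ᵥ y := Finset.sum_nonneg fun i _ => mul_self_nonneg _
  have hRx := hR x
  rw [hq, abs_le]
  constructor <;> nlinarith

theorem diagonal_sqrt_mulVec_dotProduct {w : ι → ℝ} (hw : ∀ j, 0 ≤ w j) (v : ι → ℝ) :
    diagonal (fun j => √(w j)) *ᵥ v ⬝ᵥ diagonal (fun j => √(w j)) *ᵥ v = ∑ j, w j * v j ^ 2 :=
  Finset.sum_congr rfl fun j _ => by
    rw [mulVec_diagonal, mul_mul_mul_comm, Real.mul_self_sqrt (hw j), sq]

end Matrix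

theorem specNorm_le_of_abs_dotProduct_mulVec_le {m : ℕ} {S : Matrix (Fin m) (Fin m) ℝ}
    (hS : S.IsHermitian) {c : ℝ} (hc : 0 ≤ c) (h : ∀ x, |x ⬝ᵥ S *ᵥ x| ≤ c * (x ⬝ᵥ x)) :
    specNorm S ≤ c := by
  have hsymm : (Matrix.toEuclideanCLM (𝕜 := ℝ) S).IsSymmetric :=
    Matrix.isSymmetric_toEuclideanLin_iff.mpr hS
  rw [specNorm, ContinuousLinearMap.norm_eq_iSup_rayleighQuotient _ hsymm]
  refine ciSup_le fun x => ?_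
  have hx : ‖x‖ ^ 2 = x ⬝ᵥ x := by
    rw [← real_inner_self_eq_norm_sq, EuclideanSpace.inner_eq_star_dotProduct, star_trivial]
  rw [ContinuousLinearMap.rayleighQuotient, ContinuousLinearMap.reApplyInnerSelf_apply,
    RCLike.re_to_real, real_inner_comm, Matrix.inner_toEuclideanCLM, abs_div, abs_sq, hx]
  exact div_le_of_le_mul₀ (Finset.sum_nonneg fun i _ => mul_self_nonneg _) hc (h _)

section FiniteCombination

variable {E : Type*} [NormedAddCommGroup E] [InnerProductSpace ℝ E]

theorem HilbertBasis.hasSum_inner_sq {ι : Type*} (b : HilbertBasis ι ℝ E) (x : E) :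
    HasSum (fun i => ⟪x, b i⟫ ^ 2) (‖x‖ ^ 2) := by
  simpa [sq, real_inner_comm, real_inner_self_eq_norm_sq] using b.hasSum_inner_mul_inner x x

variable (ψ : HilbertBasis ℕ ℝ E)

def finComb {n : ℕ} (v : Fin n → ℝ) : E := ∑ j : Fin n, v j • ψ j

variable {ψ}

theorem inner_finComb_basis {n : ℕ} (v : Fin n → ℝ) (k : ℕ) :
    ⟪finComb ψ v, ψ k⟫ = if h : k < n then v ⟨k, h⟩ else 0 := by
  split_ifs with h
  · simpa [finComb] using (ψ.orthonormal.comp _ Fin.val_injective).inner_left_fintype v ⟨k, h⟩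
  · simp only [finComb, sum_inner, real_inner_smul_left]
    exact Finset.sum_eq_zero fun j _ => by
      rw [ψ.orthonormal.inner_eq_zero (by have := j.isLt; omega), mul_zero]

theorem tsum_mul_inner_finComb_sq {n : ℕ} (v : Fin n → ℝ) (w : ℕ → ℝ) :
    ∑' k, w k * ⟪finComb ψ v, ψ k⟫ ^ 2 = ∑ j : Fin n, w j * v j ^ 2 := by
  rw [tsum_eq_sum (s := Finset.range n), ← Fin.sum_univ_eq_sum_range]
  · simp [inner_finComb_basis]
  · intro k hk
    simp [inner_finComb_basis, Finset.mem_range.not.mp hk]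

theorem norm_finComb_sq {n : ℕ} (v : Fin n → ℝ) : ‖finComb ψ v‖ ^ 2 = v ⬝ᵥ v := by
  rw [← (ψ.hasSum_inner_sq _).tsum_eq]
  simpa [dotProduct, sq] using tsum_mul_inner_finComb_sq v (fun _ => 1)

theorem finComb_inner_basis {g : E} {N : ℕ} (hg : ∀ k, N ≤ k → ⟪g, ψ k⟫ = 0) :
    finComb ψ (fun k : Fin N => ⟪g, ψ k⟫) = g := by
  refine ((ψ.hasSum_repr g).unique ?_).symm
  rw [finComb, Fin.sum_univ_eq_sum_range (fun k => ⟪g, ψ k⟫ • ψ k)]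
  simp_rw [ψ.repr_apply_apply, real_inner_comm g]
  exact hasSum_sum_of_ne_finset_zero fun k hk => by
    rw [hg k (by simpa using hk), zero_smul]

end FiniteCombination

section GalerkinMatrix

variable {E : Type} [NormedAddCommGroup E] [InnerProductSpace ℝ E]
variable {ψ : HilbertBasis ℕ ℝ E} {T : E →L[ℝ] E}

theorem opMat_mulVec {n : ℕ} (v : Fin n → ℝ) :
    opMat ψ T n *ᵥ v = fun k : Fin n => ⟪ψ k, T (finComb ψ v)⟫ := by
  ext k
  simp [mulVec, dotProduct, opMat, finComb, inner_sum, real_inner_smul_right, mul_comm]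

theorem dotProduct_opMat_mulVec {n : ℕ} (v : Fin n → ℝ) :
    v ⬝ᵥ opMat ψ T n *ᵥ v = ⟪finComb ψ v, T (finComb ψ v)⟫ := by
  rw [opMat_mulVec]
  simp [dotProduct, finComb, sum_inner, real_inner_smul_left]

theorem opMat_posSemidef (hT : T.IsPositive) (n : ℕ) : (opMat ψ T n).PosSemidef := by
  refine Matrix.posSemidef_iff_dotProduct_mulVec.mpr ⟨?_, fun v => ?_⟩
  · ext j k
    simp only [conjTranspose_apply, opMat, of_apply, star_trivial]
    rw [← hT.inner_left_eq_inner_right, real_inner_comm]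
  · simpa [dotProduct_opMat_mulVec] using hT.inner_nonneg_right (finComb ψ v)

theorem tsum_inner_apply_basis_add_sq_le (hT : T.IsSymmetric)
    (hs : Summable fun k => ‖T (ψ k)‖ ^ 2) (g : E) (N : ℕ) :
    ∑' k, ⟪T g, ψ (k + N)⟫ ^ 2 ≤ ‖g‖ ^ 2 * ∑' k, ‖T (ψ (k + N))‖ ^ 2 := by
  rw [← tsum_mul_left]
  refine ((summable_nat_add_iff N).mpr (ψ.hasSum_inner_sq (T g)).summable).tsum_le_tsum
    (fun k => ?_) (((summable_nat_add_iff N).mpr hs).mul_left _)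
  rw [show ⟪T g, ψ (k + N)⟫ = ⟪g, T (ψ (k + N))⟫ from hT g _, ← mul_pow, ← sq_abs]
  gcongr
  exact abs_real_inner_le_norm _ _

end GalerkinMatrix

namespace memG

variable {E : Type} [NormedAddCommGroup E] [InnerProductSpace ℝ E]
variable {ψ : HilbertBasis ℕ ℝ E} {γ : ℕ → ℝ} {d : ℝ} {T : E →L[ℝ] E}

theorem isPositive (hT : memG ψ γ d T) : T.IsPositive := by
  refine T.isPositive_iff.mpr ⟨hT.1, fun h => ?_⟩
  rcases eq_or_ne h 0 with rfl | h0
  · simp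
  · exact (hT.2.1 h h0).le

theorem norm_apply_basis_sq_le (hT : memG ψ γ d T) (k : ℕ) :
    ‖T (ψ k)‖ ^ 2 ≤ d ^ 2 * γ k ^ 2 := by
  simpa [orthonormal_iff_ite.mp ψ.orthonormal] using (hT.2.2.2 (ψ k)).2

theorem sum_sq_mul_sq_div_le (hT : memG ψ γ d T) (hγsq : Summable fun k => γ k ^ 2) {N : ℕ}
    (x : Fin N → ℝ) :
    (∑ j : Fin N, γ j ^ 2 * x j ^ 2) / d ^ 2 ≤
      opMat ψ T N *ᵥ x ⬝ᵥ opMat ψ T N *ᵥ x + d ^ 2 * (∑' k, γ (k + N) ^ 2) * (x ⬝ᵥ x) := by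
  set g := finComb ψ x
  have hlow : (∑ j : Fin N, γ j ^ 2 * x j ^ 2) / d ^ 2 ≤ ‖T g‖ ^ 2 := by
    rw [← tsum_mul_inner_finComb_sq (ψ := ψ) x (fun k => γ k ^ 2), div_eq_inv_mul]
    exact (hT.2.2.2 g).1
  have hsplit : ‖T g‖ ^ 2 =
      ∑ k ∈ Finset.range N, ⟪T g, ψ k⟫ ^ 2 + ∑' k, ⟪T g, ψ (k + N)⟫ ^ 2 := by
    rw [((hasSum_nat_add_iff' N).mpr (ψ.hasSum_inner_sq (T g))).tsum_eq]
    ring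
  have hhead : ∑ k ∈ Finset.range N, ⟪T g, ψ k⟫ ^ 2 =
      opMat ψ T N *ᵥ x ⬝ᵥ opMat ψ T N *ᵥ x := by
    rw [opMat_mulVec, ← Fin.sum_univ_eq_sum_range]
    simp [dotProduct, sq, real_inner_comm, g]
  have hnorm : Summable fun k => ‖T (ψ k)‖ ^ 2 :=
    (hγsq.mul_left (d ^ 2)).of_nonneg_of_le (fun _ => sq_nonneg _) hT.norm_apply_basis_sq_le
  have htail : ∑' k, ⟪T g, ψ (k + N)⟫ ^ 2 ≤ d ^ 2 * (∑' k, γ (k + N) ^ 2) * (x ⬝ᵥ x) :=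
    calc ∑' k, ⟪T g, ψ (k + N)⟫ ^ 2 ≤ ‖g‖ ^ 2 * ∑' k, ‖T (ψ (k + N))‖ ^ 2 :=
          tsum_inner_apply_basis_add_sq_le hT.isPositive.isSymmetric hnorm g N
      _ ≤ ‖g‖ ^ 2 * ∑' k, d ^ 2 * γ (k + N) ^ 2 := by
          refine mul_le_mul_of_nonneg_left ?_ (sq_nonneg _)
          exact ((summable_nat_add_iff N).mpr hnorm).tsum_le_tsum
            (fun k => hT.norm_apply_basis_sq_le _) (((summable_nat_add_iff N).mpr hγsq).mul_left _)
      _ = d ^ 2 * (∑' k, γ (k + N) ^ 2) * (x ⬝ᵥ x) := by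
          rw [norm_finComb_sq, tsum_mul_left]
          ring
  linarith

theorem sum_mul_sq_div_le (hT : memG ψ γ d T) (hd : 0 < d) (hγ : ∀ j, 0 ≤ γ j)
    (hγsq : Summable fun k => γ k ^ 2) {N : ℕ} (x : Fin N → ℝ) :
    (∑ j : Fin N, γ j * x j ^ 2) / d ≤
      x ⬝ᵥ opMat ψ T N *ᵥ x + d * √(∑' k, γ (k + N) ^ 2) * (x ⬝ᵥ x) := by
  set s := d * √(∑' k, γ (k + N) ^ 2)
  have hs : 0 ≤ s := by positivity
  have hs2 : s ^ 2 = d ^ 2 * ∑' k, γ (k + N) ^ 2 := by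
    rw [mul_pow, Real.sq_sqrt (tsum_nonneg fun _ => sq_nonneg _)]
  set A := diagonal fun j : Fin N => γ j / d
  have hA : A.PosSemidef := posSemidef_diagonal_iff.mpr fun j => div_nonneg (hγ _) hd.le
  have hM := opMat_posSemidef (ψ := ψ) hT.isPositive N
  have hAB : (opMat ψ T N + s • 1 - A).PosSemidef :=
    hA.sub_of_forall_mulVec_dotProduct_le (hM.add (PosSemidef.one.smul hs)) fun y => by
      have hAy : A *ᵥ y ⬝ᵥ A *ᵥ y = (∑ j : Fin N, γ j ^ 2 * y j ^ 2) / d ^ 2 := by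
        simp only [A, dotProduct, mulVec_diagonal, Finset.sum_div]
        exact Finset.sum_congr rfl fun j _ => by ring
      calc A *ᵥ y ⬝ᵥ A *ᵥ y
          ≤ opMat ψ T N *ᵥ y ⬝ᵥ opMat ψ T N *ᵥ y + s ^ 2 * (y ⬝ᵥ y) := by
            rw [hAy, hs2]
            exact hT.sum_sq_mul_sq_div_le hγsq y
        _ ≤ _ := hM.mulVec_dotProduct_add_sq_le hs y
  have hx : x ⬝ᵥ A *ᵥ x = (∑ j : Fin N, γ j * x j ^ 2) / d := by
    simp only [A, dotProduct, mulVec_diagonal, Finset.sum_div]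
    exact Finset.sum_congr rfl fun j _ => by ring
  have := hAB.dotProduct_mulVec_nonneg x
  simp only [star_trivial, sub_mulVec, add_mulVec, smul_mulVec, one_mulVec, dotProduct_sub,
    dotProduct_add, dotProduct_smul, smul_eq_mul, hx] at this
  linarith

theorem tsum_mul_inner_sq_le (hT : memG ψ γ d T) (hd : 0 < d) (hγ : ∀ j, 0 ≤ γ j)
    (hγsq : Summable fun k => γ k ^ 2) {g : E} {n : ℕ} (hg : ∀ k, n ≤ k → ⟪g, ψ k⟫ = 0) :
    ∑' k, γ k * ⟪g, ψ k⟫ ^ 2 ≤ d * ⟪g, T g⟫ := by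
  have hN : ∀ N, n ≤ N → (∑' k, γ k * ⟪g, ψ k⟫ ^ 2) / d ≤
      ⟪g, T g⟫ + d * √(∑' k, γ (k + N) ^ 2) * ‖g‖ ^ 2 := by
    intro N hnN
    have hgN := finComb_inner_basis (ψ := ψ) (N := N) fun k hk => hg k (hnN.trans hk)
    have := hT.sum_mul_sq_div_le hd hγ hγsq (fun k : Fin N => ⟪g, ψ k⟫)
    rwa [← tsum_mul_inner_finComb_sq (ψ := ψ) _ γ, dotProduct_opMat_mulVec,
      ← norm_finComb_sq (ψ := ψ), hgN] at this
  have hlim : Filter.Tendsto (fun N => ⟪g, T g⟫ + d * √(∑' k, γ (k + N) ^ 2) * ‖g‖ ^ 2)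
      Filter.atTop (nhds ⟪g, T g⟫) := by
    simpa using (((tendsto_sum_nat_add fun k => γ k ^ 2).sqrt.const_mul d).mul_const
      (‖g‖ ^ 2)).const_add ⟪g, T g⟫
  have := ge_of_tendsto hlim (Filter.eventually_atTop.mpr ⟨n, hN⟩)
  rwa [div_le_iff₀ hd, mul_comm] at this

theorem sum_mul_sq_le (hT : memG ψ γ d T) (hd : 0 < d) (hγ : ∀ j, 0 ≤ γ j)
    (hγsq : Summable fun k => γ k ^ 2) {m : ℕ} (v : Fin m → ℝ) :
    ∑ j : Fin m, γ j * v j ^ 2 ≤ d * (v ⬝ᵥ opMat ψ T m *ᵥ v) := by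
  have hv : ∀ k, m ≤ k → ⟪finComb ψ v, ψ k⟫ = 0 := fun k hk => by
    simp [inner_finComb_basis, not_lt.mpr hk]
  have := hT.tsum_mul_inner_sq_le hd hγ hγsq hv
  rwa [tsum_mul_inner_finComb_sq, ← dotProduct_opMat_mulVec] at this

theorem opMat_posDef (hT : memG ψ γ d T) (hd : 0 < d) (hγ : ∀ j, 0 < γ j)
    (hγsq : Summable fun k => γ k ^ 2) (m : ℕ) : (opMat ψ T m).PosDef := by
  refine .of_dotProduct_mulVec_pos (opMat_posSemidef hT.isPositive m).1 fun v hv => ?_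
  obtain ⟨i, hi⟩ := Function.ne_iff.mp hv
  have hpos : 0 < ∑ j : Fin m, γ j * v j ^ 2 :=
    Finset.sum_pos' (fun j _ => by have := hγ j; positivity)
      ⟨i, Finset.mem_univ _, mul_pos (hγ i) (sq_pos_iff.mpr hi)⟩
  have hle := hT.sum_mul_sq_le hd (fun j => (hγ j).le) hγsq v
  simpa using pos_of_mul_pos_right (hpos.trans_le hle) hd.le

end memG

theorem stmt_5_general (ψ : HilbertBasis ℕ ℝ H) (γ : ℕ → ℝ) (d : ℝ) (hd : 1 ≤ d)
    (hγpos : ∀ j, 0 < γ j) (hγsum : Summable γ)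
    (T : H →L[ℝ] H) (hT : memG ψ γ d T) :
    ∀ m : ℕ, 1 ≤ m →
      specNorm (Matrix.diagonal (fun j : Fin m => Real.sqrt (γ (j : ℕ))) *
          (opMat ψ T m)⁻¹ *
          Matrix.diagonal (fun j : Fin m => Real.sqrt (γ (j : ℕ)))) ≤ 4 * d ^ 3 := by
  intro m _
  set R := diagonal fun j : Fin m => √(γ j)
  have hd0 : 0 < d := by linarith
  have hRM : ∀ v, R *ᵥ v ⬝ᵥ R *ᵥ v ≤ d * (v ⬝ᵥ opMat ψ T m *ᵥ v) := fun v => by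
    rw [diagonal_sqrt_mulVec_dotProduct (w := fun j : Fin m => γ j) fun j => (hγpos j).le]
    exact hT.sum_mul_sq_le hd0 (fun j => (hγpos j).le) hγsum.sq v
  have hM := hT.opMat_posDef hd0 hγpos hγsum.sq m
  have hRT : Rᵀ = R := diagonal_transpose _
  have hS := abs_dotProduct_mul_inv_mul_transpose_mulVec_le hM.isUnit hd0 hRM
  have hSh := isHermitian_mul_mul_conjTranspose R hM.1.inv
  rw [hRT] at hS
  rw [conjTranspose_eq_transpose_of_trivial, hRT] at hSh
  calc specNorm (R * (opMat ψ T m)⁻¹ * R) ≤ d :=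
        specNorm_le_of_abs_dotProduct_mulVec_le hSh hd0.le hS
    _ ≤ 4 * d ^ 3 := by linarith [le_self_pow₀ hd (by norm_num : 3 ≠ 0)]

/-- Lemma B.1, (B.2): `sup_m ‖[∇_γ]_m^{1/2} [T]_m⁻¹ [∇_γ]_m^{1/2}‖ ≤ 4d³`. -/
theorem stmt_5 (ψ : HilbertBasis ℕ ℝ H) (γ : ℕ → ℝ) (d : ℝ) (hd : 1 ≤ d)
    (hγ1 : γ 0 = 1) (hγpos : ∀ j, 0 < γ j) (hγanti : Antitone γ)
    (hγ0 : Filter.Tendsto γ Filter.atTop (nhds 0)) (hγsum : Summable γ)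
    (T : H →L[ℝ] H) (hT : memG ψ γ d T) :
    ∀ m : ℕ, 1 ≤ m →
      specNorm (Matrix.diagonal (fun j : Fin m => Real.sqrt (γ (j : ℕ))) *
          (opMat ψ T m)⁻¹ *
          Matrix.diagonal (fun j : Fin m => Real.sqrt (γ (j : ℕ)))) ≤ 4 * d ^ 3 :=
  stmt_5_general ψ γ d hd hγpos hγsum T hT

end
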